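/- arXiv:1601.07137 — 2 statements merged into one kernel-verified Lean document; each statement's English description precedes it below -/
import Mathlib

section
/- Let v ∈ ℝ^N with N = 2^n, v_j = (1/√2)^n for all j (the uniform superposition amplitudes). Apply successively, for i = N−1 down to 1, the two-level transformation acting on coordinates (0, i) by the matrix [[cos θ, sin θ],[sin θ, −cos θ]]. Then the resulting vector has 0-th coordinate equal to (1/√2)^n · (cos^(N−1)(θ) + Σ_{i=0}^{N−2} cos^i(θ)·sin(θ)). -/
open Real Finset

open Fin.NatCast in
/-- The two-level transformation on `ℝ^(2^n)` acting on coordinates `(0, i)` by the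
matrix `[[cos θ, sin θ], [sin θ, -cos θ]]`, leaving all other coordinates fixed. -/
noncomputable def twoLevelBias (θ : ℝ) (n : ℕ) (i : ℕ) (v : Fin (2 ^ n) → ℝ) : Fin (2 ^ n) → ℝ :=
  haveI : NeZero (2 ^ n) := ⟨pow_ne_zero n two_ne_zero⟩
  fun j =>
    if j = (0 : Fin (2 ^ n)) then
      Real.cos θ * v 0 + Real.sin θ * v (i : Fin (2 ^ n))
    else if j = (i : Fin (2 ^ n)) then
      Real.sin θ * v 0 - Real.cos θ * v (i : Fin (2 ^ n))
    else v j

/-- Apply successively the two-level bias transformations on coordinates `(0, i)` for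
`i = k, k-1, …, 1`. -/
noncomputable def applyBiasGates (θ : ℝ) (n : ℕ) : ℕ → (Fin (2 ^ n) → ℝ) → (Fin (2 ^ n) → ℝ)
  | 0, v => v
  | k + 1, v => applyBiasGates θ n k (twoLevelBias θ n (k + 1) v)

open Fin.NatCast

section

variable (θ : ℝ) {n : ℕ}

theorem twoLevelBias_apply_zero (i : ℕ) (v : Fin (2 ^ n) → ℝ) :
    twoLevelBias θ n i v 0 = cos θ * v 0 + sin θ * v i :=
  if_pos rfl

theorem twoLevelBias_apply_of_ne {i : ℕ} {v : Fin (2 ^ n) → ℝ} {j : Fin (2 ^ n)}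
    (hj0 : j ≠ 0) (hji : j ≠ i) : twoLevelBias θ n i v j = v j := by
  simp only [twoLevelBias, if_neg hj0, if_neg hji]

theorem twoLevelBias_apply_natCast {i m : ℕ} (v : Fin (2 ^ n) → ℝ) (hm0 : 0 < m) (hmi : m < i)
    (hi : i < 2 ^ n) : twoLevelBias θ n i v m = v m := by
  have hval {a : ℕ} (ha : a < 2 ^ n) : ((a : Fin (2 ^ n)) : ℕ) = a := Fin.val_cast_of_lt ha
  apply twoLevelBias_apply_of_ne
  · exact fun h => by simpa [hval (hmi.trans hi), hm0.ne'] using congrArg Fin.val h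
  · exact fun h => by simpa [hval (hmi.trans hi), hval hi, hmi.ne] using congrArg Fin.val h

/-- Gate `i + 1` adds `sin θ * v (i + 1)` to the `0`-th coordinate without touching coordinates
`1, …, i`, and the `i` gates after it each multiply the `0`-th coordinate by `cos θ`. -/
theorem applyBiasGates_apply_zero {k : ℕ} (hk : k < 2 ^ n) (v : Fin (2 ^ n) → ℝ) :
    applyBiasGates θ n k v 0 =
      cos θ ^ k * v 0 + ∑ i ∈ range k, cos θ ^ i * sin θ * v ((i + 1 : ℕ) : Fin (2 ^ n)) := by
  induction k generalizing v with
  | zero => simp [applyBiasGates]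
  | succ k ih =>
    have hunchanged : ∀ i ∈ range k, twoLevelBias θ n (k + 1) v ((i + 1 : ℕ) : Fin (2 ^ n)) =
        v ((i + 1 : ℕ) : Fin (2 ^ n)) := fun i hi =>
      twoLevelBias_apply_natCast θ v i.succ_pos (by simpa using hi) hk
    rw [applyBiasGates, ih (by omega), twoLevelBias_apply_zero, sum_congr rfl fun i hi => by
      rw [hunchanged i hi], sum_range_succ]
    ring

end

theorem stmt_7 (n : ℕ) (θ : ℝ) :
    haveI : NeZero (2 ^ n) := ⟨pow_ne_zero n two_ne_zero⟩
    applyBiasGates θ n (2 ^ n - 1) (fun _ => (1 / Real.sqrt 2) ^ n) 0 =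
      (1 / Real.sqrt 2) ^ n *
        (Real.cos θ ^ (2 ^ n - 1) +
          ∑ i ∈ Finset.range (2 ^ n - 1), Real.cos θ ^ i * Real.sin θ) := by
  rw [applyBiasGates_apply_zero θ (Nat.sub_lt (Nat.two_pow_pos n) one_pos), mul_add, mul_sum]
  simp only [mul_comm]
end

section
/- For n = 2 and θ = π/8, the value (1/2)·(cos³(π/8) + sin(π/8)·(1 + cos(π/8) + cos²(π/8))) exceeds 1/√2; equivalently, the probability of measuring the target basis state in the paper's 2-qubit circuit exceeds 1/2. -/
open Real

theorem stmt_15 :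
    (1 / 2 : ℝ) *
        (Real.cos (Real.pi / 8) ^ 3 +
          Real.sin (Real.pi / 8) *
            (1 + Real.cos (Real.pi / 8) + Real.cos (Real.pi / 8) ^ 2))
      > 1 / Real.sqrt 2 ∧
    ((1 / 2 : ℝ) *
        (Real.cos (Real.pi / 8) ^ 3 +
          Real.sin (Real.pi / 8) *
            (1 + Real.cos (Real.pi / 8) + Real.cos (Real.pi / 8) ^ 2))) ^ 2
      > 1 / 2 := by
  have h2 : Real.sqrt 2 ≥ 1.414 := by
    rw [show (1.414 : ℝ) = Real.sqrt (1.414 ^ 2) by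
      rw [Real.sqrt_sq (by norm_num)]]
    exact Real.sqrt_le_sqrt (by norm_num)
  have h2' : Real.sqrt 2 ≤ 1.415 := by
    rw [show (1.415 : ℝ) = Real.sqrt (1.415 ^ 2) by
      rw [Real.sqrt_sq (by norm_num)]]
    exact Real.sqrt_le_sqrt (by norm_num)
  have hc : Real.cos (Real.pi / 8) ≥ 0.92 := by
    rw [Real.cos_pi_div_eight]
    have : Real.sqrt (2 + Real.sqrt 2) ≥ 1.84 := by
      rw [show (1.84 : ℝ) = Real.sqrt (1.84 ^ 2) by
        rw [Real.sqrt_sq (by norm_num)]]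
      exact Real.sqrt_le_sqrt (by nlinarith)
    linarith
  have hs : Real.sin (Real.pi / 8) ≥ 0.38 := by
    rw [Real.sin_pi_div_eight]
    have : Real.sqrt (2 - Real.sqrt 2) ≥ 0.76 := by
      rw [show (0.76 : ℝ) = Real.sqrt (0.76 ^ 2) by
        rw [Real.sqrt_sq (by norm_num)]]
      exact Real.sqrt_le_sqrt (by nlinarith)
    linarith
  have hc1 : Real.cos (Real.pi / 8) ≤ 1 := Real.cos_le_one _
  have key : (1 / 2 : ℝ) *
        (Real.cos (Real.pi / 8) ^ 3 +
          Real.sin (Real.pi / 8) *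
            (1 + Real.cos (Real.pi / 8) + Real.cos (Real.pi / 8) ^ 2)) ≥ 0.9 := by
    nlinarith
  have hpos : Real.sqrt 2 > 0 := by positivity
  constructor
  · rw [gt_iff_lt, div_lt_iff₀ hpos]
    nlinarith
  · nlinarith
end
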